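/- arXiv:1109.2690 — 3 statements merged into one kernel-verified Lean document; each statement's English description precedes it below -/
import Mathlib

section
/- Let P be an antichain of consecutive patterns, and for k ≥ 2 let p_k denote the number of patterns of length k in P. Then the coefficient-wise inequality (1 − t + Σ_{k≥2} (p_k/k!) t^k) · g_P(t) ≥ 1 holds, where g_P(t) = Σ_{n≥0} (a^P_n/n!) t^n; explicitly, the constant term of the product equals 1 and, for every n ≥ 1, a^P_n + Σ_{k=2}^{n} binom(n,k) · p_k · a^P_{n−k} ≥ n · a^P_{n−1}. -/
/-- Standardization of a list of (distinct) natural numbers: entry `x` is replaced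
by the number of entries of the list that are smaller than `x`.  For a list with
distinct entries this is the unique order-isomorphic permutation of `{0,…,n-1}`. -/
def std (l : List ℕ) : List ℕ := l.map (fun x => (l.filter (· < x)).length)

/-- `l` is (the list of values of) a permutation of `{0,…,n-1}` where `n = l.length`. -/
def IsPermList (l : List ℕ) : Prop := l.Perm (List.range l.length)

/-- The pattern `τ` occurs in `σ` as a consecutive pattern at (0-indexed) position `i`:
the factor of `σ` of length `τ.length` starting at position `i` is order-isomorphic to `τ`. -/
def OccursAt (τ σ : List ℕ) (i : ℕ) : Prop :=
  i + τ.length ≤ σ.length ∧ std ((σ.drop i).take τ.length) = τ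

/-- `τ` occurs somewhere in `σ` as a consecutive pattern. -/
def Occurs (τ σ : List ℕ) : Prop := ∃ i, OccursAt τ σ i

/-- `σ` avoids every pattern of the set `P`. -/
def AvoidsAll (P : Set (List ℕ)) (σ : List ℕ) : Prop := ∀ τ ∈ P, ¬ Occurs τ σ

/-- The number of permutations of length `n` avoiding all the patterns of `P`
as consecutive patterns. -/
noncomputable def avoidCount (P : Set (List ℕ)) (n : ℕ) : ℕ :=
  Nat.card {σ : List ℕ // σ.length = n ∧ IsPermList σ ∧ AvoidsAll P σ}

/-- `P` is an antichain of consecutive patterns: every element is a permutation of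
length at least 2, and no pattern of `P` occurs in a different pattern of `P`. -/
def PatternAntichain (P : Set (List ℕ)) : Prop :=
  (∀ τ ∈ P, IsPermList τ ∧ 2 ≤ τ.length) ∧
    ∀ τ₁ ∈ P, ∀ τ₂ ∈ P, τ₁ ≠ τ₂ → ¬ Occurs τ₁ τ₂

/-- `IsChainT P q σ t`: the permutation (list) `σ` is a `q`-chain with respect to the
set of forbidden patterns `P`, with tail the terminal segment of `σ` of length `t`.
The empty permutation is the unique 0-chain (its own tail), the one-element
permutation is the unique 1-chain (its own tail), and a `(q+1)`-chain is a
concatenation `σ' ++ τ` (with `τ` nonempty) such that the standardization of `σ'` is a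
`q`-chain with tail `τ'` (its last `t'` entries), and the standardization of `τ' ++ τ`
contains exactly one occurrence of a pattern from `P`, this occurrence being a
terminal segment; the tail of the `(q+1)`-chain is `τ`. -/
inductive IsChainT (P : Set (List ℕ)) : ℕ → List ℕ → ℕ → Prop
  | zero : IsChainT P 0 [] 0
  | one : IsChainT P 1 [0] 1
  | succ (q : ℕ) (σ' τ : List ℕ) (t' : ℕ)
      (hτ : τ ≠ [])
      (hperm : IsPermList (σ' ++ τ))
      (hchain : IsChainT P q (std σ') t')
      (huniq : ∃! x : ℕ × List ℕ,
        x.2 ∈ P ∧ OccursAt x.2 (std (σ'.drop (σ'.length - t') ++ τ)) x.1)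
      (hterm : ∀ i : ℕ, ∀ ρ ∈ P,
        OccursAt ρ (std (σ'.drop (σ'.length - t') ++ τ)) i → i + ρ.length = t' + τ.length) :
      IsChainT P (q + 1) (σ' ++ τ) τ.length

/-- `σ` is a `q`-chain with respect to `P` (for some tail). -/
def IsPatChain (P : Set (List ℕ)) (q : ℕ) (σ : List ℕ) : Prop := ∃ t, IsChainT P q σ t

/-- `chainCount P n q` is the number of `q`-chains of length `n` with respect to `P`. -/
noncomputable def chainCount (P : Set (List ℕ)) (n q : ℕ) : ℕ :=
  Nat.card {σ : List ℕ // σ.length = n ∧ IsPatChain P q σ}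

/-- The number of `q`-chains of length `n` whose first entry is `p`
(entries counted `1,…,n`, while lists are `0`-indexed permutations of `{0,…,n-1}`). -/
noncomputable def chainCountFst (P : Set (List ℕ)) (n q p : ℕ) : ℕ :=
  Nat.card {σ : List ℕ // σ.length = n ∧ IsPatChain P q σ ∧ σ.getD 0 0 + 1 = p}

/-- The number of `q`-chains of length `n` whose first entry is `p` and second entry is `r`
(entries counted `1,…,n`). -/
noncomputable def chainCountFstSnd (P : Set (List ℕ)) (n q p r : ℕ) : ℕ :=
  Nat.card {σ : List ℕ //
    σ.length = n ∧ IsPatChain P q σ ∧ σ.getD 0 0 + 1 = p ∧ σ.getD 1 0 + 1 = r}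

/-- A pattern `τ` has no self-overlaps if every permutation of length at most
`2 * τ.length - 2` contains at most one occurrence of `τ`. -/
def NonSelfOverlapping (τ : List ℕ) : Prop :=
  ∀ σ : List ℕ, IsPermList σ → σ.length ≤ 2 * τ.length - 2 →
    ∀ i j : ℕ, OccursAt τ σ i → OccursAt τ σ j → i = j

/-- The number of occurrences of `τ` in `σ` as a consecutive pattern. -/
noncomputable def occCount (τ σ : List ℕ) : ℕ := Nat.card {i : ℕ // OccursAt τ σ i}

/-- The `k`-fold ordered sum `λ (λ+m) (λ+2m) … (λ+(k-1)m)` of a pattern `λ` of length `m`. -/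
def ordSum (k m : ℕ) (l : List ℕ) : List ℕ :=
  ((List.range k).map (fun j => l.map (fun x => x + j * m))).flatten

/-- The length of the maximal initial segment of `l` that is an increasing run. -/
noncomputable def initRise (l : List ℕ) : ℕ :=
  sSup {j | j ≤ l.length ∧ List.Pairwise (· < ·) (l.take j)}

/-- The length of the maximal terminal segment of `l` that is an increasing run. -/
noncomputable def termRise (l : List ℕ) : ℕ :=
  sSup {j | j ≤ l.length ∧ List.Pairwise (· < ·) (l.drop (l.length - j))}

/-!
Appending a last entry of value `v < n` to an avoider of length `n - 1` (shifting the values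
`≥ v` up by one) is injective, so `n * a_{n-1}` is at most the number of permutations of length
`n` whose first `n - 1` entries avoid `P`. Such a permutation either avoids `P`, or some
`τ ∈ P` of length `k ≥ 2` occurs at its very end. In the latter case it is determined by the set
of its last `k` values, by `τ`, and by the standardization of its first `n - k` entries, which
avoids `P`: at most `C(n, k) * p_k * a_{n-k}` permutations for each `k`.
-/

lemma std_eq_map_countP (l : List ℕ) : std l = l.map (fun x => l.countP (· < x)) := by
  simp [std, List.countP_eq_length_filter]

lemma std_length (l : List ℕ) : (std l).length = l.length := List.length_map _

lemma strictMonoOn_countP_lt (l : List ℕ) :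
    StrictMonoOn (fun x => l.countP (· < x)) {x | x ∈ l} := by
  rintro a ha b - hab
  replace ha : a ∈ l := ha
  induction l with
  | nil => simp at ha
  | cons c t ih =>
    have hle : t.countP (· < a) ≤ t.countP (· < b) :=
      List.countP_mono_left fun x _ hx => by simp only [decide_eq_true_eq] at hx ⊢; omega
    rcases List.mem_cons.mp ha with rfl | ha
    · simp [hab]; omega
    · have : t.countP (· < a) < t.countP (· < b) := ih ha
      simp only [List.countP_cons, decide_eq_true_eq]
      split_ifs <;> omega

lemma std_map_of_strictMonoOn {l : List ℕ} {f : ℕ → ℕ} (hf : StrictMonoOn f {x | x ∈ l}) :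
    std (l.map f) = std l := by
  rw [std_eq_map_countP, std_eq_map_countP, List.map_map]
  refine List.map_congr_left fun x hx => ?_
  simp only [Function.comp_apply, List.countP_map]
  exact List.countP_congr fun y hy => by simp [hf.lt_iff_lt hy hx]

lemma countP_range_lt {x n : ℕ} (hx : x ≤ n) : (List.range n).countP (· < x) = x := by
  induction n with
  | zero => simp; omega
  | succ n ih =>
    rw [List.range_succ, List.countP_append]
    rcases Nat.lt_or_ge n x with hnx | hnx
    · obtain rfl : x = n + 1 := by omega
      have hall : (List.range n).countP (· < n + 1) = n := by
        rw [List.countP_eq_length.mpr fun y hy => ?_, List.length_range]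
        simpa using (List.mem_range.mp hy).trans (Nat.lt_succ_self n)
      rw [hall, List.countP_singleton]
      simp
    · simp [ih hnx, show ¬ n < x by omega]

lemma isPermList_iff {l : List ℕ} : IsPermList l ↔ l.Nodup ∧ ∀ x ∈ l, x < l.length := by
  refine ⟨fun h => ⟨h.nodup_iff.mpr List.nodup_range, fun x hx => by simpa using h.subset hx⟩,
    fun ⟨hnd, hlt⟩ => ?_⟩
  refine (List.subperm_of_subset hnd fun x hx => ?_).perm_of_length_le (by simp)
  simpa using hlt x hx

lemma std_of_isPermList {l : List ℕ} (h : IsPermList l) : std l = l := by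
  rw [std_eq_map_countP]
  refine (List.map_congr_left fun x hx => ?_).trans (List.map_id l)
  rw [h.countP_eq, countP_range_lt ((isPermList_iff.mp h).2 x hx).le]
  rfl

lemma isPermList_std {l : List ℕ} (hl : l.Nodup) : IsPermList (std l) := by
  rw [isPermList_iff, std_length, std_eq_map_countP]
  refine ⟨hl.map_on fun x hx y hy => (strictMonoOn_countP_lt l).injOn hx hy, ?_⟩
  simp only [List.mem_map]
  rintro _ ⟨x, hx, rfl⟩
  exact List.countP_lt_length_iff.mpr ⟨x, hx, by simp⟩

lemma eq_of_perm_of_std_eq {l l' : List ℕ} (hp : l.Perm l') (h : std l = std l') : l = l' := by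
  have hrank : (fun x => l'.countP (· < x)) = fun x => l.countP (· < x) :=
    funext fun x => (hp.countP_eq _).symm
  rw [std_eq_map_countP, std_eq_map_countP, hrank] at h
  refine List.ext_getElem hp.length_eq fun i h₁ h₂ => ?_
  have hi := congrArg (·[i]?) h
  simp only [List.getElem?_map, List.getElem?_eq_getElem h₁, List.getElem?_eq_getElem h₂,
    Option.map_some, Option.some.injEq] at hi
  exact (strictMonoOn_countP_lt l).injOn (List.getElem_mem h₁)
    (hp.symm.subset (List.getElem_mem h₂)) hi

lemma eq_of_std_take_drop_eq {l l' : List ℕ} {m : ℕ} (hp : l.Perm l')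
    (hdp : (l.drop m).Perm (l'.drop m)) (ht : std (l.take m) = std (l'.take m))
    (hd : std (l.drop m) = std (l'.drop m)) : l = l' := by
  have htp : (l.take m).Perm (l'.take m) := by
    have hsplit : (l.take m ++ l.drop m).Perm (l'.take m ++ l'.drop m) := by
      simpa only [List.take_append_drop] using hp
    exact (List.perm_append_right_iff (l.drop m)).mp (hsplit.trans (hdp.symm.append_left _))
  rw [← List.take_append_drop m l, ← List.take_append_drop m l', eq_of_perm_of_std_eq htp ht,
    eq_of_perm_of_std_eq hdp hd]

lemma occursAt_map_iff {τ l : List ℕ} {f : ℕ → ℕ} (hf : StrictMonoOn f {x | x ∈ l}) (i : ℕ) :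
    OccursAt τ (l.map f) i ↔ OccursAt τ l i := by
  have hsub : StrictMonoOn f {x | x ∈ (l.drop i).take τ.length} :=
    hf.mono fun x hx => List.mem_of_mem_drop (List.mem_of_mem_take hx)
  simp only [OccursAt, List.length_map, ← List.map_drop, ← List.map_take,
    std_map_of_strictMonoOn hsub]

lemma avoidsAll_map_iff {P : Set (List ℕ)} {l : List ℕ} {f : ℕ → ℕ}
    (hf : StrictMonoOn f {x | x ∈ l}) : AvoidsAll P (l.map f) ↔ AvoidsAll P l := by
  simp only [AvoidsAll, Occurs, occursAt_map_iff hf]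

lemma avoidsAll_std_iff {P : Set (List ℕ)} {l : List ℕ} : AvoidsAll P (std l) ↔ AvoidsAll P l := by
  rw [std_eq_map_countP]
  exact avoidsAll_map_iff (strictMonoOn_countP_lt l)

lemma occursAt_take_iff {τ l : List ℕ} {i m : ℕ} :
    OccursAt τ (l.take m) i ↔ OccursAt τ l i ∧ i + τ.length ≤ m := by
  unfold OccursAt
  by_cases him : i + τ.length ≤ m
  · have hfac : ((l.take m).drop i).take τ.length = (l.drop i).take τ.length := by
      rw [List.drop_take, List.take_take]
      congr 1
      omega
    simp only [hfac, List.length_take, le_min_iff]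
    tauto
  · simp only [List.length_take, le_min_iff, him]
    tauto

lemma AvoidsAll.take {P : Set (List ℕ)} {l : List ℕ} (h : AvoidsAll P l) (m : ℕ) :
    AvoidsAll P (l.take m) :=
  fun τ hτ ⟨i, hi⟩ => h τ hτ ⟨i, (occursAt_take_iff.mp hi).1⟩

lemma exists_mem_std_drop_eq_of_not_avoidsAll {P : Set (List ℕ)} {l : List ℕ}
    (hpre : AvoidsAll P (l.take (l.length - 1))) (hl : ¬ AvoidsAll P l) :
    ∃ τ ∈ P, τ.length ≤ l.length ∧ std (l.drop (l.length - τ.length)) = τ := by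
  simp only [AvoidsAll, Occurs, not_forall, not_not] at hl
  obtain ⟨τ, hτ, i, hi⟩ := hl
  have hend : i + τ.length = l.length := by
    by_contra hne
    exact hpre τ hτ ⟨i, occursAt_take_iff.mpr ⟨hi, by have := hi.1; omega⟩⟩
  refine ⟨τ, hτ, by omega, ?_⟩
  have := hi.2
  rwa [show i = l.length - τ.length by omega, List.take_of_length_le (by simp; omega)] at this

lemma finite_setOf_isPermList (n : ℕ) : {σ : List ℕ | σ.length = n ∧ IsPermList σ}.Finite :=
  (List.range n).permutations.toFinset.finite_toSet.subset fun σ ⟨hlen, hσ⟩ => by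
    rw [Finset.mem_coe, List.mem_toFinset, List.mem_permutations, ← hlen]
    exact hσ

def shiftFrom (v x : ℕ) : ℕ := if x < v then x else x + 1

lemma strictMono_shiftFrom (v : ℕ) : StrictMono (shiftFrom v) := by
  intro x y h
  unfold shiftFrom
  split_ifs <;> omega

lemma shiftFrom_ne (v x : ℕ) : shiftFrom v x ≠ v := by
  unfold shiftFrom
  split_ifs <;> omega

def appendLast (v : ℕ) (π : List ℕ) : List ℕ := π.map (shiftFrom v) ++ [v]

section Counting

variable (P : Set (List ℕ)) (n : ℕ)

def avoiders : Set (List ℕ) := {σ | σ.length = n ∧ IsPermList σ ∧ AvoidsAll P σ}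

lemma avoidCount_eq_ncard : avoidCount P n = (avoiders P n).ncard := Nat.card_coe_set_eq _

def prefixAvoiders : Set (List ℕ) :=
  {σ | σ.length = n ∧ IsPermList σ ∧ AvoidsAll P (σ.take (n - 1))}

def endsWithPattern (k : ℕ) : Set (List ℕ) :=
  {σ | σ.length = n ∧ IsPermList σ ∧ AvoidsAll P (σ.take (n - k)) ∧ std (σ.drop (n - k)) ∈ P}

variable {P n}

lemma avoidCount_zero (hP : [] ∉ P) : avoidCount P 0 = 1 := by
  rw [avoidCount_eq_ncard, Set.ncard_eq_one]
  refine ⟨[], Set.eq_singleton_iff_unique_mem.mpr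
    ⟨⟨rfl, List.Perm.refl _, ?_⟩, fun σ hσ => List.eq_nil_of_length_eq_zero hσ.1⟩⟩
  rintro τ hτ ⟨i, hi, -⟩
  rw [List.length_nil] at hi
  obtain rfl : τ = [] := List.eq_nil_of_length_eq_zero (by omega)
  exact hP hτ

lemma appendLast_mem_prefixAvoiders {v : ℕ} {π : List ℕ} (hv : v < n)
    (hπ : π ∈ avoiders P (n - 1)) : appendLast v π ∈ prefixAvoiders P n := by
  obtain ⟨hlen, hperm, hav⟩ := hπ
  obtain ⟨hnd, hlt⟩ := isPermList_iff.mp hperm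
  have hmono : StrictMonoOn (shiftFrom v) {x | x ∈ π} := (strictMono_shiftFrom v).strictMonoOn _
  have hlen' : (appendLast v π).length = n := by simp [appendLast, hlen]; omega
  refine ⟨hlen', isPermList_iff.mpr ⟨?_, ?_⟩, ?_⟩
  · refine List.nodup_append.mpr ⟨hnd.map (strictMono_shiftFrom v).injective,
      List.nodup_singleton v, ?_⟩
    simp only [List.mem_map, List.mem_singleton]
    rintro _ ⟨x, -, rfl⟩ _ rfl
    exact shiftFrom_ne _ _
  · rw [hlen']
    simp only [appendLast, List.mem_append, List.mem_map, List.mem_singleton]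
    rintro _ (⟨x, hx, rfl⟩ | rfl)
    · have := hlt x hx
      unfold shiftFrom
      split_ifs <;> omega
    · exact hv
  · rw [appendLast, List.take_left' (by simp [hlen])]
    exact (avoidsAll_map_iff hmono).mpr hav

lemma injOn_appendLast :
    Set.InjOn (fun x : ℕ × List ℕ => appendLast x.1 x.2) {x | IsPermList x.2} := by
  rintro ⟨v, π⟩ hπ ⟨w, ρ⟩ hρ h
  have hlen : π.length = ρ.length := by simpa [appendLast] using congrArg List.length h
  obtain ⟨hmap, hlast⟩ := List.append_inj h (by simpa using hlen)
  obtain rfl : v = w := by simpa using hlast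
  have hstd := congrArg std hmap
  rw [std_map_of_strictMonoOn ((strictMono_shiftFrom v).strictMonoOn _),
    std_map_of_strictMonoOn ((strictMono_shiftFrom v).strictMonoOn _),
    std_of_isPermList hπ, std_of_isPermList hρ] at hstd
  exact Prod.ext rfl hstd

lemma mul_avoidCount_pred_le_ncard_prefixAvoiders :
    n * avoidCount P (n - 1) ≤ (prefixAvoiders P n).ncard := by
  calc n * avoidCount P (n - 1) = ((Finset.range n : Set ℕ) ×ˢ avoiders P (n - 1)).ncard := by
        rw [Set.ncard_prod, Set.ncard_coe_finset, Finset.card_range, avoidCount_eq_ncard]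
    _ ≤ (prefixAvoiders P n).ncard :=
      Set.ncard_le_ncard_of_injOn _
        (fun x hx => appendLast_mem_prefixAvoiders (Finset.mem_range.mp hx.1) hx.2)
        (injOn_appendLast.mono fun x hx => hx.2.2.1)
        ((finite_setOf_isPermList n).subset fun σ h => ⟨h.1, h.2.1⟩)

lemma prefixAvoiders_diff_subset (hP : ∀ τ ∈ P, 2 ≤ τ.length) :
    prefixAvoiders P n \ avoiders P n ⊆ ⋃ k ∈ Finset.Icc 2 n, endsWithPattern P n k := by
  rintro σ ⟨⟨rfl, hσ, hpre⟩, hbad⟩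
  obtain ⟨τ, hτ, hτlen, hdrop⟩ :=
    exists_mem_std_drop_eq_of_not_avoidsAll hpre fun h => hbad ⟨rfl, hσ, h⟩
  simp only [Set.mem_iUnion, Finset.mem_Icc]
  refine ⟨τ.length, ⟨hP τ hτ, hτlen⟩, rfl, hσ, ?_, by rwa [hdrop]⟩
  have := hpre.take (σ.length - τ.length)
  rwa [List.take_take, min_eq_left (by have := hP τ hτ; omega)] at this

def suffixSplit (m : ℕ) (σ : List ℕ) : Finset ℕ × List ℕ × List ℕ :=
  ((σ.drop m).toFinset, std (σ.drop m), std (σ.take m))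

lemma injOn_suffixSplit (m : ℕ) :
    Set.InjOn (suffixSplit m) {σ | σ.length = n ∧ IsPermList σ} := by
  rintro σ ⟨hlen, hσ⟩ σ' ⟨hlen', hσ'⟩ h
  simp only [suffixSplit, Prod.mk.injEq] at h
  obtain ⟨hset, hd, ht⟩ := h
  refine eq_of_std_take_drop_eq (hσ.trans (by rw [hlen, ← hlen']; exact hσ'.symm)) ?_ ht hd
  exact List.perm_of_nodup_nodup_toFinset_eq
    ((isPermList_iff.mp hσ).1.sublist (List.drop_sublist _ _))
    ((isPermList_iff.mp hσ').1.sublist (List.drop_sublist _ _)) hset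

lemma suffixSplit_mem {k : ℕ} (hk : k ≤ n) {σ : List ℕ} (hσ : σ ∈ endsWithPattern P n k) :
    suffixSplit (n - k) σ ∈ ((Finset.range n).powersetCard k : Set (Finset ℕ)) ×ˢ
      ({τ | τ ∈ P ∧ τ.length = k} ×ˢ avoiders P (n - k)) := by
  obtain ⟨hlen, hperm, hpre, hpat⟩ := hσ
  obtain ⟨hnd, hlt⟩ := isPermList_iff.mp hperm
  rw [suffixSplit]
  have hdlen : (σ.drop (n - k)).length = k := by simp [hlen]; omega
  refine ⟨Finset.mem_powersetCard.mpr ⟨fun x hx => ?_, ?_⟩,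
    ⟨hpat, by rw [std_length, hdlen]⟩, by simp [std_length, hlen],
    isPermList_std (hnd.sublist (List.take_sublist _ _)), avoidsAll_std_iff.mpr hpre⟩
  · rw [List.mem_toFinset] at hx
    rw [Finset.mem_range, ← hlen]
    exact hlt x (List.mem_of_mem_drop hx)
  · rw [List.toFinset_card_of_nodup (hnd.sublist (List.drop_sublist _ _)), hdlen]

lemma ncard_endsWithPattern_le (hP : ∀ τ ∈ P, IsPermList τ) {k : ℕ} (hk : k ≤ n) :
    (endsWithPattern P n k).ncard ≤
      n.choose k * Nat.card {τ : List ℕ // τ ∈ P ∧ τ.length = k} * avoidCount P (n - k) := by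
  have hfin : ({τ | τ ∈ P ∧ τ.length = k} ×ˢ avoiders P (n - k)).Finite :=
    ((finite_setOf_isPermList k).subset fun τ h => ⟨h.2, hP τ h.1⟩).prod
      ((finite_setOf_isPermList _).subset fun σ h => ⟨h.1, h.2.1⟩)
  calc (endsWithPattern P n k).ncard
      ≤ (((Finset.range n).powersetCard k : Set (Finset ℕ)) ×ˢ
          ({τ | τ ∈ P ∧ τ.length = k} ×ˢ avoiders P (n - k))).ncard :=
        Set.ncard_le_ncard_of_injOn _ (fun _ hσ => suffixSplit_mem hk hσ)
          ((injOn_suffixSplit (n := n) _).mono fun _ hσ => And.intro hσ.1 hσ.2.1)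
          ((Finset.finite_toSet _).prod hfin)
    _ = _ := by
      rw [Set.ncard_prod, Set.ncard_prod, Set.ncard_coe_finset, Finset.card_powersetCard,
        Finset.card_range, avoidCount_eq_ncard, mul_assoc]
      rfl

end Counting

theorem statement0_general (P : Set (List ℕ)) (hP : PatternAntichain P) :
    avoidCount P 0 = 1 ∧
      ∀ n : ℕ, 1 ≤ n →
        n * avoidCount P (n - 1) ≤
          avoidCount P n +
            ∑ k ∈ Finset.Icc 2 n,
              n.choose k * Nat.card {τ : List ℕ // τ ∈ P ∧ τ.length = k} *
                avoidCount P (n - k) := by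
  refine ⟨avoidCount_zero fun h => by simpa using (hP.1 _ h).2, fun n _ => ?_⟩
  have hfin : (⋃ k ∈ Finset.Icc 2 n, endsWithPattern P n k).Finite :=
    (finite_setOf_isPermList n).subset (Set.iUnion₂_subset fun _ _ _ h => ⟨h.1, h.2.1⟩)
  calc n * avoidCount P (n - 1) ≤ (prefixAvoiders P n).ncard :=
        mul_avoidCount_pred_le_ncard_prefixAvoiders
    _ ≤ avoidCount P n + (prefixAvoiders P n \ avoiders P n).ncard := by
        rw [avoidCount_eq_ncard, add_comm]
        exact Set.ncard_le_ncard_sdiff_add_ncard _ _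
          ((finite_setOf_isPermList n).subset fun σ h => ⟨h.1, h.2.1⟩)
    _ ≤ avoidCount P n + ∑ k ∈ Finset.Icc 2 n, (endsWithPattern P n k).ncard := by
        gcongr
        exact (Set.ncard_le_ncard (prefixAvoiders_diff_subset fun τ hτ => (hP.1 τ hτ).2) hfin).trans
          (Finset.set_ncard_biUnion_le _ _)
    _ ≤ _ := by
        gcongr with k hk
        exact ncard_endsWithPattern_le (fun τ hτ => (hP.1 τ hτ).1) (Finset.mem_Icc.mp hk).2

/-- Golod–Shafarevich type inequality for consecutive pattern avoidance:
the constant term of `(1 - t + Σ_{k≥2} (p_k/k!) t^k) · g_P(t)` equals 1 and all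
other coefficients are nonnegative, i.e. for `n ≥ 1`,
`a^P_n + Σ_{k=2}^n C(n,k) p_k a^P_{n-k} ≥ n · a^P_{n-1}`. -/
theorem statement0 (P : Set (List ℕ)) (hP : PatternAntichain P)
    (hfin : ∀ k : ℕ, {τ : List ℕ | τ ∈ P ∧ τ.length = k}.Finite) :
    avoidCount P 0 = 1 ∧
      ∀ n : ℕ, 1 ≤ n →
        n * avoidCount P (n - 1) ≤
          avoidCount P n +
            ∑ k ∈ Finset.Icc 2 n,
              n.choose k * Nat.card {τ : List ℕ // τ ∈ P ∧ τ.length = k} *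
                avoidCount P (n - k) :=
  statement0_general P hP
end

section
/- Let τ be a single consecutive pattern of length k ≥ 2, and suppose α > 0 satisfies 1 − α + α^k / k! = 0. Then for every n ≥ 0, the number of permutations of length n avoiding τ as a consecutive pattern is at least α^{−n} · n!. -/
theorem IsPermList.nodup {l : List ℕ} (h : IsPermList l) : l.Nodup :=
  h.symm.nodup List.nodup_range

theorem IsPermList.lt_length {l : List ℕ} (h : IsPermList l) {x : ℕ} (hx : x ∈ l) :
    x < l.length :=
  List.mem_range.1 (h.mem_iff.1 hx)

namespace ConsecutivePattern

def countLT (l : List ℕ) (x : ℕ) : ℕ := (l.filter (· < x)).length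

theorem std_eq_map_countLT (l : List ℕ) : std l = l.map (countLT l) := rfl

theorem length_std (l : List ℕ) : (std l).length = l.length := List.length_map _

theorem countLT_lt_length {l : List ℕ} {a : ℕ} (ha : a ∈ l) : countLT l a < l.length :=
  List.length_filter_lt_length_iff_exists.2 ⟨a, ha, by simp⟩

theorem strictMonoOn_countLT (l : List ℕ) : StrictMonoOn (countLT l) {x | x ∈ l} := by
  intro a ha b _ hab
  have hfilter : l.filter (· < a) = (l.filter (· < b)).filter (· < a) := by
    rw [List.filter_filter]
    refine List.filter_congr fun x _ => ?_
    by_cases hxa : x < a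
    · simp [hxa, hxa.trans hab]
    · simp [hxa]
  rw [countLT, countLT, hfilter]
  exact List.length_filter_lt_length_iff_exists.2 ⟨a, List.mem_filter.2 ⟨ha, by simpa⟩, by simp⟩

theorem countLT_eq_of_perm {l₁ l₂ : List ℕ} (h : l₁.Perm l₂) : countLT l₁ = countLT l₂ := by
  funext x
  simp only [countLT, ← List.countP_eq_length_filter, h.countP_eq]

theorem std_map {l : List ℕ} {f : ℕ → ℕ} (hf : StrictMonoOn f {x | x ∈ l}) :
    std (l.map f) = std l := by
  rw [std_eq_map_countLT, std_eq_map_countLT, List.map_map]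
  refine List.map_congr_left fun a ha => ?_
  simp only [Function.comp, countLT, List.filter_map, List.length_map]
  congr 1
  exact List.filter_congr fun x hx => by simp [hf.lt_iff_lt hx ha]

theorem isPermList_of_nodup {l : List ℕ} (hnd : l.Nodup) (hlt : ∀ x ∈ l, x < l.length) :
    IsPermList l :=
  (List.subperm_of_subset hnd fun x hx => List.mem_range.2 (hlt x hx)).perm_of_length_le (by simp)

theorem isPermList_std {l : List ℕ} (hnd : l.Nodup) : IsPermList (std l) := by
  rw [std_eq_map_countLT] at *
  refine isPermList_of_nodup (hnd.map_on fun a ha b hb => (strictMonoOn_countLT l).injOn ha hb)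
    fun x hx => ?_
  obtain ⟨a, ha, rfl⟩ := List.mem_map.1 hx
  simpa using countLT_lt_length ha

theorem eq_of_perm_of_std_eq {l₁ l₂ : List ℕ} (hp : l₁.Perm l₂) (h : std l₁ = std l₂) :
    l₁ = l₂ := by
  rw [std_eq_map_countLT, std_eq_map_countLT, ← countLT_eq_of_perm hp] at h
  refine List.ext_getElem hp.length_eq fun i h₁ h₂ => (strictMonoOn_countLT l₁).injOn
    (List.getElem_mem h₁) (hp.mem_iff.2 (List.getElem_mem h₂)) ?_
  have hi := List.getElem_of_eq h (by simpa using h₁)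
  rwa [List.getElem_map, List.getElem_map] at hi

theorem occursAt_map_iff {τ σ : List ℕ} {f : ℕ → ℕ} (hf : StrictMonoOn f {x | x ∈ σ}) (i : ℕ) :
    OccursAt τ (σ.map f) i ↔ OccursAt τ σ i := by
  have hwindow : StrictMonoOn f {x | x ∈ (σ.drop i).take τ.length} :=
    hf.mono fun x hx => List.mem_of_mem_drop (List.mem_of_mem_take hx)
  simp only [OccursAt, List.length_map, ← List.map_drop, ← List.map_take, std_map hwindow]

theorem occursAt_std_iff {τ σ : List ℕ} (i : ℕ) : OccursAt τ (std σ) i ↔ OccursAt τ σ i :=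
  occursAt_map_iff (strictMonoOn_countLT σ) i

theorem occursAt_append_iff {τ u w : List ℕ} (j : ℕ) :
    OccursAt τ (u ++ w) (u.length + j) ↔ OccursAt τ w j := by
  simp only [OccursAt, List.drop_length_add_append, List.length_append]
  exact and_congr_left' (by omega)

theorem avoidsAll_singleton_iff {τ σ : List ℕ} : AvoidsAll {τ} σ ↔ ∀ i, ¬ OccursAt τ σ i := by
  simp [AvoidsAll, Occurs]

theorem finite_isPermList (n : ℕ) : {σ : List ℕ | σ.length = n ∧ IsPermList σ}.Finite := by
  refine (List.finite_toSet (List.range n).permutations).subset fun σ ⟨hlen, hσ⟩ => ?_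
  show σ ∈ (List.range n).permutations
  rw [List.mem_permutations, ← hlen]
  exact hσ

def liftAbove (h j : ℕ) : ℕ := if j < h then j else j + 1

theorem strictMono_liftAbove (h : ℕ) : StrictMono (liftAbove h) := by
  intro a b hab
  unfold liftAbove
  split_ifs <;> omega

theorem liftAbove_ne (h j : ℕ) : liftAbove h j ≠ h := by
  unfold liftAbove
  split_ifs <;> omega

theorem liftAbove_lt {h j n : ℕ} (hj : j < n) : liftAbove h j < n + 1 := by
  unfold liftAbove
  split_ifs <;> omega

section Counting

variable (τ : List ℕ)

def avoiders (n : ℕ) : Set (List ℕ) := {σ | σ.length = n ∧ IsPermList σ ∧ AvoidsAll {τ} σ}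

def avoidersPastFirst (n : ℕ) : Set (List ℕ) :=
  {σ | σ.length = n ∧ IsPermList σ ∧ ∀ i, 0 < i → ¬ OccursAt τ σ i}

theorem avoidCount_eq_ncard (n : ℕ) : avoidCount {τ} n = (avoiders τ n).ncard := rfl

theorem finite_avoiders (n : ℕ) : (avoiders τ n).Finite :=
  (finite_isPermList n).subset fun _ hσ => ⟨hσ.1, hσ.2.1⟩

theorem finite_avoidersPastFirst (n : ℕ) : (avoidersPastFirst τ n).Finite :=
  (finite_isPermList n).subset fun _ hσ => ⟨hσ.1, hσ.2.1⟩

theorem cons_map_liftAbove_mem {n h : ℕ} (hh : h < n + 1) {π : List ℕ} (hπ : π ∈ avoiders τ n) :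
    h :: π.map (liftAbove h) ∈ avoidersPastFirst τ (n + 1) := by
  obtain ⟨hlen, hperm, havoid⟩ := hπ
  have hmono : StrictMonoOn (liftAbove h) {x | x ∈ π} := (strictMono_liftAbove h).strictMonoOn _
  refine ⟨by simp [hlen], isPermList_of_nodup ?_ ?_, fun i hi hocc => ?_⟩
  · refine List.nodup_cons.2 ⟨by simpa using fun x _ => liftAbove_ne h x, ?_⟩
    exact hperm.nodup.map (strictMono_liftAbove h).injective
  · simp only [List.mem_cons, List.mem_map, List.length_cons, List.length_map, hlen]
    rintro x (rfl | ⟨j, hj, rfl⟩)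
    · exact hh
    · exact liftAbove_lt (hlen ▸ hperm.lt_length hj)
  · obtain ⟨j, rfl⟩ : ∃ j, i = [h].length + j := ⟨i - 1, by simp; omega⟩
    exact avoidsAll_singleton_iff.1 havoid j
      ((occursAt_map_iff hmono j).1 ((occursAt_append_iff j).1 hocc))

theorem succ_mul_ncard_avoiders_le (n : ℕ) :
    (n + 1) * (avoiders τ n).ncard ≤ (avoidersPastFirst τ (n + 1)).ncard := by
  calc (n + 1) * (avoiders τ n).ncard = (Set.Iio (n + 1) ×ˢ avoiders τ n).ncard := by
        rw [Set.ncard_prod, Set.ncard_Iio_nat]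
    _ ≤ _ := by
        refine Set.ncard_le_ncard_of_injOn (fun p => p.1 :: p.2.map (liftAbove p.1))
          (fun p hp => cons_map_liftAbove_mem τ hp.1 hp.2) ?_ (finite_avoidersPastFirst τ _)
        rintro ⟨h, π⟩ _ ⟨h', π'⟩ _ heq
        simp only [List.cons.injEq] at heq
        obtain ⟨rfl, hmap⟩ := heq
        rw [List.map_injective_iff.2 (strictMono_liftAbove h).injective hmap]

variable {τ} in
theorem take_toFinset_mem_powersetCard {σ : List ℕ} {n : ℕ} (hlen : σ.length = n)
    (hσ : IsPermList σ) (hocc : OccursAt τ σ 0) :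
    (σ.take τ.length).toFinset ∈ Finset.powersetCard τ.length (Finset.range n) := by
  refine Finset.mem_powersetCard.2 ⟨fun x hx => ?_, ?_⟩
  · exact Finset.mem_range.2 (hlen ▸ hσ.lt_length (List.mem_of_mem_take (List.mem_toFinset.1 hx)))
  · rw [List.toFinset_card_of_nodup (hσ.nodup.sublist (List.take_sublist _ _)),
      List.length_take]
    exact min_eq_left (by simpa using hocc.1)

theorem std_drop_mem_avoiders (hτ : τ ≠ []) {σ : List ℕ} {n : ℕ} (hσ : σ ∈ avoidersPastFirst τ n) :
    std (σ.drop τ.length) ∈ avoiders τ (n - τ.length) := by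
  obtain ⟨hlen, hperm, hpast⟩ := hσ
  refine ⟨by simp [length_std, hlen], isPermList_std (hperm.nodup.sublist
    (List.drop_sublist _ _)), avoidsAll_singleton_iff.2 fun i hocc => ?_⟩
  have hocc' := (occursAt_append_iff (u := σ.take τ.length) i).2 ((occursAt_std_iff i).1 hocc)
  rw [List.take_append_drop] at hocc'
  have hfits := hocc.1
  have hτpos := List.length_pos_iff.2 hτ
  simp only [length_std, List.length_drop] at hfits
  exact hpast _ (by simp; omega) hocc'

variable {τ} in
theorem eq_of_occursAt_zero_of_take_toFinset_eq {σ σ' : List ℕ} (hσ : IsPermList σ)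
    (hσ' : IsPermList σ') (hlen : σ.length = σ'.length) (hocc : OccursAt τ σ 0)
    (hocc' : OccursAt τ σ' 0) (htake : (σ.take τ.length).toFinset = (σ'.take τ.length).toFinset)
    (hdrop : std (σ.drop τ.length) = std (σ'.drop τ.length)) : σ = σ' := by
  have hnd := hσ.nodup
  have hnd' := hσ'.nodup
  have htake_perm : (σ.take τ.length).Perm (σ'.take τ.length) :=
    List.perm_of_nodup_nodup_toFinset_eq (hnd.sublist (List.take_sublist _ _))
      (hnd'.sublist (List.take_sublist _ _)) htake
  have htake_eq : σ.take τ.length = σ'.take τ.length :=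
    eq_of_perm_of_std_eq htake_perm (by simpa using hocc.2.trans hocc'.2.symm)
  have hdrop_perm : (σ.drop τ.length).Perm (σ'.drop τ.length) := by
    have hperm : σ.Perm σ' := by
      unfold IsPermList at hσ hσ'
      rw [hlen] at hσ
      exact hσ.trans hσ'.symm
    rw [← List.take_append_drop τ.length σ, ← List.take_append_drop τ.length σ', htake_eq] at hperm
    exact (List.perm_append_left_iff _).1 hperm
  rw [← List.take_append_drop τ.length σ, ← List.take_append_drop τ.length σ', htake_eq,
    eq_of_perm_of_std_eq hdrop_perm hdrop]

theorem ncard_occursAt_zero_le (hτ : τ ≠ []) (n : ℕ) :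
    {σ ∈ avoidersPastFirst τ n | OccursAt τ σ 0}.ncard ≤
      n.choose τ.length * (avoiders τ (n - τ.length)).ncard := by
  calc _ ≤ ((Finset.powersetCard τ.length (Finset.range n) : Set (Finset ℕ)) ×ˢ
          avoiders τ (n - τ.length)).ncard := by
        refine Set.ncard_le_ncard_of_injOn
          (fun σ => ((σ.take τ.length).toFinset, std (σ.drop τ.length)))
          (fun σ hσ => ⟨take_toFinset_mem_powersetCard hσ.1.1 hσ.1.2.1 hσ.2,
            std_drop_mem_avoiders τ hτ hσ.1⟩)
          (fun σ hσ σ' hσ' heq => ?_) ((Finset.finite_toSet _).prod (finite_avoiders τ _))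
        obtain ⟨htake, hdrop⟩ := Prod.mk.inj heq
        exact eq_of_occursAt_zero_of_take_toFinset_eq hσ.1.2.1 hσ'.1.2.1
          (hσ.1.1.trans hσ'.1.1.symm) hσ.2 hσ'.2 htake hdrop
    _ = _ := by
        rw [Set.ncard_prod, Set.ncard_coe_finset, Finset.card_powersetCard, Finset.card_range]

theorem avoidersPastFirst_subset (n : ℕ) :
    avoidersPastFirst τ n ⊆ avoiders τ n ∪ {σ ∈ avoidersPastFirst τ n | OccursAt τ σ 0} := by
  intro σ hσ
  by_cases h0 : OccursAt τ σ 0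
  · exact Or.inr ⟨hσ, h0⟩
  refine Or.inl ⟨hσ.1, hσ.2.1, avoidsAll_singleton_iff.2 fun i => ?_⟩
  rcases i.eq_zero_or_pos with rfl | hi
  exacts [h0, hσ.2.2 i hi]

theorem succ_mul_avoidCount_le (hτ : τ ≠ []) (n : ℕ) :
    (n + 1) * avoidCount {τ} n ≤
      avoidCount {τ} (n + 1) + (n + 1).choose τ.length * avoidCount {τ} (n + 1 - τ.length) := by
  simp only [avoidCount_eq_ncard]
  calc _ ≤ (avoidersPastFirst τ (n + 1)).ncard := succ_mul_ncard_avoiders_le τ n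
    _ ≤ (avoiders τ (n + 1) ∪ {σ ∈ avoidersPastFirst τ (n + 1) | OccursAt τ σ 0}).ncard :=
        Set.ncard_le_ncard (avoidersPastFirst_subset τ _)
          ((finite_avoiders τ _).union ((finite_avoidersPastFirst τ _).subset (Set.sep_subset _ _)))
    _ ≤ _ := (Set.ncard_union_le _ _).trans (Nat.add_le_add_left (ncard_occursAt_zero_le τ hτ _) _)

theorem avoidCount_zero (hτ : τ ≠ []) : avoidCount {τ} 0 = 1 := by
  rw [avoidCount_eq_ncard, Set.ncard_eq_one]
  refine ⟨[], Set.ext fun σ => ⟨fun hσ => List.length_eq_zero_iff.1 hσ.1, ?_⟩⟩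
  rintro rfl
  refine ⟨rfl, List.Perm.nil, avoidsAll_singleton_iff.2 fun i hocc => ?_⟩
  have hfits := hocc.1
  have hτpos := List.length_pos_iff.2 hτ
  simp only [List.length_nil] at hfits
  omega

end Counting

end ConsecutivePattern

section Recurrence

open Nat

theorem choose_mul_pow_div_factorial_le {α : ℝ} (hα : 0 ≤ α) (n k : ℕ) :
    (n.choose k : ℝ) * (α ^ n / n !) ≤ α ^ k / k ! * (α ^ (n - k) / (n - k)!) := by
  rcases le_or_gt k n with hkn | hnk
  · refine le_of_eq ?_
    rw [Nat.cast_choose ℝ hkn, ← Nat.add_sub_cancel' hkn, pow_add, Nat.add_sub_cancel_left]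
    field_simp
  · rw [Nat.choose_eq_zero_of_lt hnk, Nat.cast_zero, zero_mul]
    positivity

theorem monotone_of_one_add_mul_le {c : ℕ → ℝ} {β : ℝ} {k : ℕ} (hβ : 0 ≤ β) (hk : 0 < k)
    (h : ∀ n, (1 + β) * c n ≤ c (n + 1) + β * c (n + 1 - k)) : Monotone c := by
  suffices key : ∀ n, ∀ m ≤ n, c m ≤ c n from fun m n hmn => key n m hmn
  intro n
  induction n with
  | zero => intro m hm; rw [Nat.le_zero.1 hm]
  | succ n ih =>
    have hstep : c n ≤ c (n + 1) := by
      have hback := mul_le_mul_of_nonneg_left (ih (n + 1 - k) (by omega)) hβ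
      linarith [h n]
    intro m hm
    rcases hm.lt_or_eq with hm | rfl
    · exact (ih m (by omega)).trans hstep
    · exact le_rfl

theorem factorial_div_pow_le_of_recurrence {a : ℕ → ℕ} {k : ℕ} {α : ℝ} (hk : 0 < k) (hα : 0 < α)
    (hroot : 1 - α + α ^ k / k ! = 0) (ha0 : a 0 = 1)
    (hrec : ∀ n, (n + 1) * a n ≤ a (n + 1) + (n + 1).choose k * a (n + 1 - k)) (n : ℕ) :
    (n ! : ℝ) / α ^ n ≤ a n := by
  set c : ℕ → ℝ := fun n => a n * (α ^ n / n !) with hc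
  have hmono : Monotone c := by
    refine monotone_of_one_add_mul_le (β := α ^ k / k !) (by positivity) hk fun n => ?_
    rw [show 1 + α ^ k / k ! = α by linarith]
    have hrec' : ((n + 1 : ℕ) : ℝ) * a n ≤ a (n + 1) + ((n + 1).choose k : ℝ) * a (n + 1 - k) := by
      exact_mod_cast hrec n
    have hchoose := mul_le_mul_of_nonneg_left (choose_mul_pow_div_factorial_le hα.le (n + 1) k)
      (Nat.cast_nonneg (a (n + 1 - k)))
    calc α * c n = ((n + 1 : ℕ) : ℝ) * a n * (α ^ (n + 1) / (n + 1)!) := by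
          simp only [hc, Nat.factorial_succ, pow_succ]; push_cast; field_simp
      _ ≤ (a (n + 1) + ((n + 1).choose k : ℝ) * a (n + 1 - k)) * (α ^ (n + 1) / (n + 1)!) :=
          mul_le_mul_of_nonneg_right hrec' (by positivity)
      _ = c (n + 1) + a (n + 1 - k) * ((n + 1).choose k * (α ^ (n + 1) / (n + 1)!)) := by
          simp only [hc]; ring
      _ ≤ c (n + 1) + α ^ k / k ! * c (n + 1 - k) := by
          simp only [hc]; linarith
  have h1 : 1 ≤ c n := by simpa [hc, ha0] using hmono (Nat.zero_le n)
  rwa [div_le_iff₀ (by positivity), ← one_le_div (by positivity : (0 : ℝ) < n !), mul_div_assoc]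

end Recurrence

theorem statement2_general (k : ℕ) (hk : 2 ≤ k) (τ : List ℕ)
    (hτlen : τ.length = k)
    (α : ℝ) (hα : 0 < α) (hroot : 1 - α + α ^ k / (k.factorial : ℝ) = 0) :
    ∀ n : ℕ, (n.factorial : ℝ) / α ^ n ≤ (avoidCount {τ} n : ℝ) := by
  subst hτlen
  have hτ : τ ≠ [] := List.ne_nil_of_length_pos (by omega)
  exact factorial_div_pow_le_of_recurrence (by omega) hα hroot
    (ConsecutivePattern.avoidCount_zero τ hτ) (ConsecutivePattern.succ_mul_avoidCount_le τ hτ)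

/-- For a single pattern `τ` of length `k ≥ 2` and a root `α > 0` of `1 - t + t^k/k!`,
the number of permutations of length `n` avoiding `τ` is at least `α^{-n} n!`. -/
theorem statement2 (k : ℕ) (hk : 2 ≤ k) (τ : List ℕ)
    (hτperm : IsPermList τ) (hτlen : τ.length = k)
    (α : ℝ) (hα : 0 < α) (hroot : 1 - α + α ^ k / (k.factorial : ℝ) = 0) :
    ∀ n : ℕ, (n.factorial : ℝ) / α ^ n ≤ (avoidCount {τ} n : ℝ) :=
  statement2_general k hk τ hτlen α hα hroot
end

section
/- Let k ≥ 2 and let a_n be the number of permutations of length n avoiding the increasing pattern 1 2 … k as a consecutive pattern (i.e., having no k consecutive entries in increasing order). Then, as an identity of formal power series over ℚ, (Σ_{q≥0} t^{kq} / (kq)! − Σ_{q≥0} t^{kq+1} / (kq+1)!) · (Σ_{n≥0} a_n t^n / n!) = 1. -/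
/-!
Comparing coefficients of `tⁿ/n!`, the identity says that for `n ≥ 1`
`∑_{m ≡ 0 (mod k)} C(n,m) a_{n-m} = ∑_{m ≡ 1 (mod k)} C(n,m) a_{n-m}`.
The term `C(n,m) a_{n-m}` counts the permutations of length `n` whose first `m` entries increase
and whose last `n - m` entries contain no increasing run of length `k`; call such an `m` a cut.
The cuts of a fixed permutation form an interval that is empty, or `{0, …, r}` with `1 ≤ r < k`,
or consists of `k` consecutive integers, so it contains as many cuts `≡ 0` as cuts `≡ 1 (mod k)`.
-/

namespace ConsecutiveIncreasing

open Finset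

def rank (l : List ℕ) (x : ℕ) : ℕ := (l.filter (· < x)).length

theorem std_eq_map_rank (l : List ℕ) : std l = l.map (rank l) := rfl

theorem rank_eq_of_perm {l l' : List ℕ} (h : l.Perm l') (x : ℕ) : rank l x = rank l' x := by
  simp only [rank, ← List.countP_eq_length_filter]
  exact h.countP_eq _

theorem strictMonoOn_rank {l : List ℕ} (hl : l.Nodup) : StrictMonoOn (rank l) {x | x ∈ l} := by
  intro x hx y _ hxy
  have hcard : ∀ z, rank l z = (l.toFinset.filter (· < z)).card := fun z => by
    rw [rank, ← List.toFinset_card_of_nodup (hl.filter _), List.toFinset_filter]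
    simp
  rw [hcard, hcard]
  refine card_lt_card ⟨fun z hz => ?_, ?_⟩
  · simp only [mem_filter] at hz ⊢
    exact ⟨hz.1, hz.2.trans hxy⟩
  intro hsub
  simpa using hsub (by simpa [hxy] using hx : x ∈ l.toFinset.filter (· < y))

theorem rank_getElem_of_pairwise {s : List ℕ} (hs : s.Pairwise (· < ·)) (j : ℕ)
    (hj : j < s.length) : rank s s[j] = j := by
  induction s generalizing j with
  | nil => simp at hj
  | cons a t ih =>
    have ha : ∀ x ∈ t, a < x := fun x hx => List.rel_of_pairwise_cons hs hx
    cases j with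
    | zero =>
      simp only [rank, List.getElem_cons_zero, List.length_eq_zero_iff, List.filter_eq_nil_iff,
        List.mem_cons, decide_eq_true_eq, not_lt]
      rintro x (rfl | hx)
      exacts [le_rfl, (ha x hx).le]
    | succ j =>
      have hj' : j < t.length := by simpa using hj
      have hrank : rank (a :: t) t[j] = rank t t[j] + 1 := by
        simp [rank, ha _ (List.getElem_mem hj')]
      rw [List.getElem_cons_succ, hrank, ih (List.pairwise_cons.1 hs).2 j hj']

theorem rank_range {n x : ℕ} (hx : x < n) : rank (List.range n) x = x := by
  have := rank_getElem_of_pairwise List.pairwise_lt_range x (by simpa using hx)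
  rwa [List.getElem_range] at this

theorem pairwise_lt_map_iff {l : List ℕ} {f : ℕ → ℕ} (hf : StrictMonoOn f {x | x ∈ l}) :
    (l.map f).Pairwise (· < ·) ↔ l.Pairwise (· < ·) := by
  rw [List.pairwise_map]
  exact List.Pairwise.iff_of_mem fun ha hb => hf.lt_iff_lt ha hb

theorem std_perm_range {l : List ℕ} (hl : l.Nodup) : (std l).Perm (List.range l.length) := by
  set s := l.toFinset.sort (· ≤ ·)
  have hs : s.Perm l := (Finset.sort_perm_toList _ _).trans (List.toFinset_toList hl)
  have hsorted : s.Pairwise (· < ·) := (Finset.sortedLT_sort _).pairwise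
  have hmap : s.map (rank l) = List.range l.length := by
    refine List.ext_getElem (by simp [hs.length_eq]) fun j hj _ => ?_
    simp only [List.getElem_map, List.getElem_range, rank_eq_of_perm hs.symm]
    exact rank_getElem_of_pairwise hsorted j (by simpa using hj)
  exact hmap ▸ (hs.map (rank l)).symm

theorem std_eq_self_of_isPermList {l : List ℕ} (hl : IsPermList l) : std l = l := by
  refine List.ext_getElem (by simp [std]) fun j _ hj => ?_
  have hlt : l[j] < l.length := by simpa using hl.mem_iff.1 (List.getElem_mem hj)
  simp [std_eq_map_rank, rank_eq_of_perm hl, rank_range hlt]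

theorem std_map {l : List ℕ} {f : ℕ → ℕ} (hf : StrictMonoOn f {x | x ∈ l}) :
    std (l.map f) = std l := by
  simp only [std_eq_map_rank, List.map_map]
  refine List.map_congr_left fun x hx => ?_
  simp only [Function.comp, rank, ← List.countP_eq_length_filter, List.countP_map]
  exact List.countP_congr fun a ha => by simpa using hf.lt_iff_lt ha hx

theorem std_eq_range_iff {l : List ℕ} (hl : l.Nodup) :
    std l = List.range l.length ↔ l.Pairwise (· < ·) := by
  constructor
  · intro h
    rw [← pairwise_lt_map_iff (strictMonoOn_rank hl), ← std_eq_map_rank, h]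
    exact List.pairwise_lt_range
  · intro h
    refine List.ext_getElem (by simp [std]) fun j hj _ => ?_
    simp only [std_eq_map_rank, List.getElem_map, List.getElem_range]
    exact rank_getElem_of_pairwise h j (by simpa [std] using hj)

def AvoidsIncRun (k : ℕ) (l : List ℕ) : Prop :=
  ∀ i, i + k ≤ l.length → ¬ ((l.drop i).take k).Pairwise (· < ·)

theorem avoidsIncRun_map_iff {k : ℕ} {l : List ℕ} {f : ℕ → ℕ} (hf : StrictMonoOn f {x | x ∈ l}) :
    AvoidsIncRun k (l.map f) ↔ AvoidsIncRun k l := by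
  refine forall_congr' fun i => ?_
  rw [List.length_map, ← List.map_drop, ← List.map_take,
    pairwise_lt_map_iff (hf.mono fun x hx => List.mem_of_mem_drop (List.mem_of_mem_take hx))]

theorem avoidsIncRun_std_iff {k : ℕ} {l : List ℕ} (hl : l.Nodup) :
    AvoidsIncRun k (std l) ↔ AvoidsIncRun k l :=
  avoidsIncRun_map_iff (strictMonoOn_rank hl)

theorem occursAt_range_iff {σ : List ℕ} (hσ : σ.Nodup) {k i : ℕ} :
    OccursAt (List.range k) σ i ↔ i + k ≤ σ.length ∧ ((σ.drop i).take k).Pairwise (· < ·) := by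
  rw [OccursAt, List.length_range]
  refine and_congr_right fun h => ?_
  have hlen : ((σ.drop i).take k).length = k := by simp; omega
  rw [show List.range k = List.range ((σ.drop i).take k).length by rw [hlen]]
  exact std_eq_range_iff (hσ.sublist ((List.take_sublist _ _).trans (List.drop_sublist _ _)))

theorem avoidsAll_range_iff {k : ℕ} {σ : List ℕ} (hσ : σ.Nodup) :
    AvoidsAll {List.range k} σ ↔ AvoidsIncRun k σ := by
  simp only [AvoidsAll, Set.mem_singleton_iff, forall_eq, Occurs, occursAt_range_iff hσ,
    AvoidsIncRun, not_exists, not_and]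

/-- `A j` means that position `j` is an ascent. -/
def AscRun (A : ℕ → Prop) (i len : ℕ) : Prop := ∀ j, i ≤ j → j + 1 < i + len → A j

theorem pairwise_take_drop_iff_ascRun {σ : List ℕ} {i len : ℕ} (h : i + len ≤ σ.length) :
    ((σ.drop i).take len).Pairwise (· < ·) ↔
      AscRun (fun j => σ.getD j 0 < σ.getD (j + 1) 0) i len := by
  have hlen : ((σ.drop i).take len).length = len := by simp; omega
  have hget : ∀ x (hx : x < len), ((σ.drop i).take len)[x]'(by omega) = σ.getD (i + x) 0 :=
    fun x hx => by rw [List.getElem_take, List.getElem_drop, List.getD_eq_getElem]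
  rw [← List.isChain_iff_pairwise, List.isChain_iff_getElem]
  constructor
  · intro hw j hij hj
    have := hw (j - i) (by omega)
    rwa [hget _ (by omega), hget _ (by omega), show i + (j - i) = j by omega,
      show i + (j - i + 1) = j + 1 by omega] at this
  · intro hA x hx
    rw [hlen] at hx
    rw [hget _ (by omega), hget _ (by omega)]
    exact hA (i + x) (by omega) (by omega)

theorem card_filter_Ico_mod_eq_one (a : ℕ) {k c : ℕ} (hc : c < k) :
    ((Ico a (a + k)).filter (· % k = c)).card = 1 := by
  obtain ⟨m, hm, hmc⟩ := mem_image.1 (Nat.image_Ico_mod a k ▸ mem_range.2 hc)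
  refine card_eq_one.2 ⟨m, eq_singleton_iff_unique_mem.2 ⟨mem_filter.2 ⟨hm, hmc⟩, ?_⟩⟩
  intro x hx
  rw [mem_filter] at hx
  exact Nat.mod_injOn_Ico a k hx.1 hm (hx.2.trans hmc.symm)

theorem card_filter_Icc_mod_zero_eq_mod_one {M r k : ℕ} (hk : 2 ≤ k)
    (h : r < M ∨ (M = 0 ∧ 1 ≤ r ∧ r < k) ∨ r + 1 = M + k) :
    ((Icc M r).filter (· % k = 0)).card = ((Icc M r).filter (· % k = 1)).card := by
  rcases h with h | ⟨rfl, hr1, hrk⟩ | h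
  · simp [Icc_eq_empty_of_lt h]
  · have hsingle : ∀ c ≤ r, (Icc 0 r).filter (· % k = c) = {c} := fun c hc => by
      ext x
      simp only [mem_filter, mem_Icc, mem_singleton]
      constructor
      · rintro ⟨⟨-, hx⟩, hxc⟩
        rwa [Nat.mod_eq_of_lt (by omega)] at hxc
      · rintro rfl
        exact ⟨⟨Nat.zero_le _, hc⟩, Nat.mod_eq_of_lt (by omega)⟩
    rw [hsingle 0 (Nat.zero_le _), hsingle 1 hr1, card_singleton, card_singleton]
  · have hIcc : Icc M r = Ico M (M + k) := by
      ext x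
      simp only [mem_Icc, mem_Ico]
      omega
    rw [hIcc, card_filter_Ico_mod_eq_one M (by omega), card_filter_Ico_mod_eq_one M (by omega)]

def IsCut (A : ℕ → Prop) (k n m : ℕ) : Prop :=
  AscRun A 0 m ∧ ∀ i, m ≤ i → i + k ≤ n → ¬ AscRun A i k

/-- The cuts form an interval `[M, r]`, where `r` is the length of the initial run and `M` the
first position from which no `k`-run starts. If `M > 0`, a `k`-run starts at `M - 1`, which
forces `r = M + k - 1`; if `M = 0`, then `1 ≤ r < k`. -/
theorem exists_isCut_iff_mem_Icc {A : ℕ → Prop} {k n : ℕ} (hk : 2 ≤ k) (hn : 1 ≤ n) :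
    ∃ M r, r ≤ n ∧ (∀ m ≤ n, IsCut A k n m ↔ M ≤ m ∧ m ≤ r) ∧
      (r < M ∨ (M = 0 ∧ 1 ≤ r ∧ r < k) ∨ r + 1 = M + k) := by
  classical
  set r := Nat.findGreatest (AscRun A 0) n
  have hrn : r ≤ n := Nat.findGreatest_le n
  have hrun_r : AscRun A 0 r := Nat.findGreatest_spec (m := 0) n.zero_le (by simp [AscRun])
  have hrun : ∀ m ≤ n, AscRun A 0 m ↔ m ≤ r := fun m hm =>
    ⟨Nat.le_findGreatest hm, fun hmr j _ hj => hrun_r j j.zero_le (by omega)⟩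
  have hex : ∃ m, ∀ i, m ≤ i → i + k ≤ n → ¬ AscRun A i k := ⟨n, fun i hi hik => by omega⟩
  set M := Nat.find hex
  have hnorun : ∀ m, (∀ i, m ≤ i → i + k ≤ n → ¬ AscRun A i k) ↔ M ≤ m := fun m =>
    ⟨Nat.find_min' hex, fun hm i hi => Nat.find_spec hex i (by omega)⟩
  refine ⟨M, r, hrn, fun m hm => by rw [IsCut, hrun m hm, hnorun, and_comm], ?_⟩
  by_cases hrM : r < M
  · exact Or.inl hrM
  right
  rcases Nat.eq_zero_or_pos M with hM | hM
  · have hr1 : 1 ≤ r := (hrun 1 hn).1 fun j _ hj => by omega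
    refine Or.inl ⟨hM, hr1, Nat.lt_of_not_le fun hkr => ?_⟩
    exact (hnorun 0).2 hM.le 0 le_rfl (by omega) ((hrun k (by omega)).2 hkr)
  · obtain ⟨i, hi, hik, hrun_i⟩ : ∃ i, M - 1 ≤ i ∧ i + k ≤ n ∧ AscRun A i k := by
      by_contra! h
      exact absurd ((hnorun (M - 1)).1 h) (by omega)
    have hiM : i = M - 1 := by
      by_contra hne
      exact Nat.find_spec hex i (by omega) hik hrun_i
    subst hiM
    have hge : M + k - 1 ≤ r := (hrun _ (by omega)).1 fun j _ hj =>
      if hjM : j + 1 < M then hrun_r j j.zero_le (by omega) else hrun_i j (by omega) (by omega)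
    have hle : r ≤ M + k - 1 := Nat.le_of_not_lt fun hlt =>
      Nat.find_spec hex M le_rfl (by omega) fun j _ hj => hrun_r j j.zero_le (by omega)
    omega

theorem card_isCut_mod_zero_eq_mod_one (A : ℕ → Prop) {k n : ℕ} [DecidablePred (IsCut A k n)]
    (hk : 2 ≤ k) (hn : 1 ≤ n) :
    ((range (n + 1)).filter (fun m => m % k = 0 ∧ IsCut A k n m)).card =
      ((range (n + 1)).filter (fun m => m % k = 1 ∧ IsCut A k n m)).card := by
  obtain ⟨M, r, hrn, hcut, hshape⟩ := exists_isCut_iff_mem_Icc (A := A) hk hn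
  have hfilter : ∀ c, (range (n + 1)).filter (fun m => m % k = c ∧ IsCut A k n m) =
      (Icc M r).filter (· % k = c) := fun c => by
    ext m
    simp only [mem_filter, Finset.mem_range, mem_Icc]
    constructor
    · rintro ⟨hm, hmc, hcm⟩
      exact ⟨(hcut m (by omega)).1 hcm, hmc⟩
    · rintro ⟨hMr, hmc⟩
      exact ⟨by omega, hmc, (hcut m (by omega)).2 hMr⟩
  rw [hfilter, hfilter]
  exact card_filter_Icc_mod_zero_eq_mod_one hk hshape

open Classical

def permsOf (n : ℕ) : Finset (List ℕ) := (List.range n).permutations.toFinset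

theorem mem_permsOf {n : ℕ} {σ : List ℕ} : σ ∈ permsOf n ↔ σ.Perm (List.range n) := by
  simp [permsOf, List.mem_permutations]

noncomputable def avoiders (k n : ℕ) : Finset (List ℕ) := (permsOf n).filter (AvoidsIncRun k)

theorem avoidCount_eq_card_avoiders (k n : ℕ) :
    avoidCount {List.range k} n = (avoiders k n).card := by
  rw [avoidCount, ← Nat.card_eq_finsetCard]
  refine Nat.card_congr (Equiv.subtypeEquivRight fun σ => ?_)
  rw [avoiders, mem_filter, mem_permsOf, IsPermList]
  constructor
  · rintro ⟨rfl, hσ, havoid⟩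
    exact ⟨hσ, (avoidsAll_range_iff (hσ.nodup_iff.2 List.nodup_range)).1 havoid⟩
  · rintro ⟨hσ, havoid⟩
    have hlen : σ.length = n := by simpa using hσ.length_eq
    exact ⟨hlen, hlen ▸ hσ, (avoidsAll_range_iff (hσ.nodup_iff.2 List.nodup_range)).2 havoid⟩

def relabel (S : Finset ℕ) (π : List ℕ) : List ℕ := π.map fun x => (S.sort (· ≤ ·)).getD x 0

theorem strictMonoOn_getD_sort (S : Finset ℕ) :
    StrictMonoOn (fun x => (S.sort (· ≤ ·)).getD x 0) (Set.Iio S.card) := by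
  intro x hx y hy hxy
  rw [Set.mem_Iio, ← Finset.length_sort (· ≤ ·)] at hx hy
  simp only [List.getD_eq_getElem _ _ hx, List.getD_eq_getElem _ _ hy]
  exact List.pairwise_iff_getElem.1 (Finset.sortedLT_sort S).pairwise x y hx hy hxy

theorem strictMonoOn_getD_sort_of_perm {S : Finset ℕ} {π : List ℕ}
    (hπ : π.Perm (List.range S.card)) :
    StrictMonoOn (fun x => (S.sort (· ≤ ·)).getD x 0) {x | x ∈ π} :=
  (strictMonoOn_getD_sort S).mono fun x hx => by simpa using hπ.mem_iff.1 hx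

theorem relabel_perm_sort {S : Finset ℕ} {π : List ℕ} (hπ : π.Perm (List.range S.card)) :
    (relabel S π).Perm (S.sort (· ≤ ·)) := by
  refine (hπ.map _).trans (List.Perm.of_eq (List.ext_getElem (by simp) fun j _ hj => ?_))
  simp [List.getElem?_eq_getElem hj]

theorem std_relabel {S : Finset ℕ} {π : List ℕ} (hπ : π.Perm (List.range S.card)) :
    std (relabel S π) = π := by
  rw [relabel, std_map (strictMonoOn_getD_sort_of_perm hπ), std_eq_self_of_isPermList]
  rwa [IsPermList, show π.length = S.card by simpa using hπ.length_eq]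

theorem relabel_std {l : List ℕ} (hl : l.Nodup) : relabel l.toFinset (std l) = l := by
  have hs : (l.toFinset.sort (· ≤ ·)).Perm l :=
    (Finset.sort_perm_toList _ _).trans (List.toFinset_toList hl)
  rw [relabel, std_eq_map_rank, List.map_map]
  conv_rhs => rw [← List.map_id l]
  refine List.map_congr_left fun x hx => ?_
  obtain ⟨j, hj, rfl⟩ := List.getElem_of_mem (hs.mem_iff.2 hx)
  rw [Function.comp_apply, id, rank_eq_of_perm hs.symm,
    rank_getElem_of_pairwise (Finset.sortedLT_sort _).pairwise j hj, List.getD_eq_getElem _ _ hj]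

theorem avoidsIncRun_relabel_iff {k : ℕ} {S : Finset ℕ} {π : List ℕ}
    (hπ : π.Perm (List.range S.card)) : AvoidsIncRun k (relabel S π) ↔ AvoidsIncRun k π :=
  avoidsIncRun_map_iff (strictMonoOn_getD_sort_of_perm hπ)

theorem sort_append_sort_sdiff_perm {n : ℕ} {S : Finset ℕ} (hS : S ⊆ range n) :
    (S.sort (· ≤ ·) ++ (range n \ S).sort (· ≤ ·)).Perm (List.range n) := by
  rw [← Multiset.coe_eq_coe, ← Multiset.coe_add, Finset.sort_eq, Finset.sort_eq, sdiff_val,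
    add_tsub_cancel_of_le (val_le_iff.2 hS), range_val, Multiset.coe_range]

theorem toFinset_drop_eq_sdiff {n m : ℕ} {σ : List ℕ} (hσ : σ.Perm (List.range n)) :
    (σ.drop m).toFinset = range n \ (σ.take m).toFinset := by
  have hnd : (σ.take m ++ σ.drop m).Nodup := by
    rw [List.take_append_drop]
    exact hσ.nodup_iff.2 List.nodup_range
  have hunion : (σ.take m).toFinset ∪ (σ.drop m).toFinset = range n := by
    rw [← List.toFinset_append, List.take_append_drop, List.toFinset_eq_of_perm _ _ hσ]
    ext x
    simp
  rw [← hunion, union_sdiff_cancel_left]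
  exact List.disjoint_toFinset_iff_disjoint.2 (List.disjoint_of_nodup_append hnd)

theorem perm_range_card_sdiff {n m : ℕ} {S : Finset ℕ} {π : List ℕ} (hS : S ⊆ range n)
    (hScard : S.card = m) (hπ : π.Perm (List.range (n - m))) :
    π.Perm (List.range (range n \ S).card) := by
  rwa [card_sdiff_of_subset hS, card_range, hScard]

/-- Splitting off the increasing prefix of length `m`: such a permutation is determined by the
set of its first `m` values and the standardization of its remaining entries. -/
theorem card_filter_pairwise_take_avoidsIncRun_drop (k : ℕ) {n m : ℕ} (hm : m ≤ n) :
    ((permsOf n).filter fun σ => (σ.take m).Pairwise (· < ·) ∧ AvoidsIncRun k (σ.drop m)).card =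
      n.choose m * (avoiders k (n - m)).card := by
  rw [show n.choose m * _ = ((powersetCard m (range n)) ×ˢ avoiders k (n - m)).card by
    rw [card_product, card_powersetCard, card_range]]
  refine card_bij' (fun σ _ => ((σ.take m).toFinset, std (σ.drop m)))
    (fun p _ => p.1.sort (· ≤ ·) ++ relabel (range n \ p.1) p.2) ?_ ?_ ?_ ?_
  · intro σ hσ
    obtain ⟨hσ, -, havoid⟩ := mem_filter.1 hσ
    rw [mem_permsOf] at hσ
    have hnd := hσ.nodup_iff.2 List.nodup_range
    have hlen : σ.length = n := by simpa using hσ.length_eq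
    have hdrop : (σ.drop m).Nodup := hnd.sublist (List.drop_sublist _ _)
    refine mem_product.2 ⟨mem_powersetCard.2 ⟨fun x hx => ?_, ?_⟩, ?_⟩
    · simpa using hσ.mem_iff.1 (List.mem_of_mem_take (List.mem_toFinset.1 hx))
    · rw [List.toFinset_card_of_nodup (hnd.sublist (List.take_sublist _ _)), List.length_take]
      omega
    · rw [avoiders, mem_filter, mem_permsOf, avoidsIncRun_std_iff hdrop]
      refine ⟨?_, havoid⟩
      simpa [hlen] using std_perm_range hdrop
  · rintro ⟨S, π⟩ hp
    simp only [mem_product, mem_powersetCard, avoiders, mem_filter, mem_permsOf] at hp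
    obtain ⟨⟨hS, hScard⟩, hπ, hπavoid⟩ := hp
    have hπ' := perm_range_card_sdiff hS hScard hπ
    have hslen : (S.sort (· ≤ ·)).length = m := by rw [length_sort, hScard]
    rw [mem_filter, mem_permsOf, List.take_left' hslen, List.drop_left' hslen]
    exact ⟨((relabel_perm_sort hπ').append_left _).trans (sort_append_sort_sdiff_perm hS),
      (Finset.sortedLT_sort S).pairwise, (avoidsIncRun_relabel_iff hπ').2 hπavoid⟩
  · intro σ hσ
    obtain ⟨hσ, hsorted, -⟩ := mem_filter.1 hσ
    have hnd := (mem_permsOf.1 hσ).nodup_iff.2 List.nodup_range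
    simp only
    rw [← toFinset_drop_eq_sdiff (mem_permsOf.1 hσ),
      relabel_std (hnd.sublist (List.drop_sublist _ _)),
      (List.toFinset_sort _ (hnd.sublist (List.take_sublist _ _))).2 (hsorted.imp le_of_lt),
      List.take_append_drop]
  · rintro ⟨S, π⟩ hp
    simp only [mem_product, mem_powersetCard, avoiders, mem_filter, mem_permsOf] at hp
    obtain ⟨⟨hS, hScard⟩, hπ, -⟩ := hp
    have hπ' := perm_range_card_sdiff hS hScard hπ
    have hslen : (S.sort (· ≤ ·)).length = m := by rw [length_sort, hScard]
    simp only [List.take_left' hslen, List.drop_left' hslen, sort_toFinset, std_relabel hπ']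

theorem card_avoiders_zero {k : ℕ} (hk : 1 ≤ k) : (avoiders k 0).card = 1 := by
  rw [card_eq_one]
  refine ⟨[], ?_⟩
  ext σ
  simp only [avoiders, mem_filter, mem_permsOf, List.range_zero, List.perm_nil, mem_singleton,
    and_iff_left_iff_imp]
  rintro rfl i hi
  simp at hi
  omega

theorem pairwise_take_and_avoidsIncRun_drop_iff {k n m : ℕ} {σ : List ℕ} (hσ : σ.length = n)
    (hm : m ≤ n) :
    ((σ.take m).Pairwise (· < ·) ∧ AvoidsIncRun k (σ.drop m)) ↔
      IsCut (fun j => σ.getD j 0 < σ.getD (j + 1) 0) k n m := by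
  have htake := pairwise_take_drop_iff_ascRun (σ := σ) (i := 0) (len := m) (by omega)
  rw [List.drop_zero] at htake
  refine and_congr htake ⟨fun h i hi hik => ?_, fun h i hik => ?_⟩
  · have := h (i - m) (by simp; omega)
    rwa [List.drop_drop, pairwise_take_drop_iff_ascRun (by omega),
      show m + (i - m) = i by omega] at this
  · simp only [List.length_drop] at hik
    rw [List.drop_drop, pairwise_take_drop_iff_ascRun (by omega)]
    exact h (m + i) (by omega) (by omega)

/-- Both sums count the pairs `(σ, m)` of a permutation `σ` of length `n` and a cut `m` of `σ`
in a given residue class modulo `k`. -/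
theorem sum_choose_mul_card_avoiders_mod_zero_eq_mod_one {k n : ℕ} (hk : 2 ≤ k) (hn : 1 ≤ n) :
    ∑ m ∈ (range (n + 1)).filter (· % k = 0), n.choose m * (avoiders k (n - m)).card =
      ∑ m ∈ (range (n + 1)).filter (· % k = 1), n.choose m * (avoiders k (n - m)).card := by
  have hcount : ∀ c, ∑ m ∈ (range (n + 1)).filter (· % k = c),
      n.choose m * (avoiders k (n - m)).card = ∑ σ ∈ permsOf n, ((range (n + 1)).filter
        fun m => m % k = c ∧ IsCut (fun j => σ.getD j 0 < σ.getD (j + 1) 0) k n m).card := by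
    intro c
    let IsSplit : ℕ → List ℕ → Prop := fun m σ =>
      (σ.take m).Pairwise (· < ·) ∧ AvoidsIncRun k (σ.drop m)
    calc _ = ∑ m ∈ (range (n + 1)).filter (· % k = c),
          ((permsOf n).bipartiteAbove IsSplit m).card :=
          sum_congr rfl fun m hm => (card_filter_pairwise_take_avoidsIncRun_drop k
            (Nat.lt_succ_iff.1 (mem_range.1 (mem_filter.1 hm).1))).symm
      _ = ∑ σ ∈ permsOf n, (((range (n + 1)).filter (· % k = c)).bipartiteBelow IsSplit σ).card :=
          sum_card_bipartiteAbove_eq_sum_card_bipartiteBelow _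
      _ = _ := by
          refine sum_congr rfl fun σ hσ => congr_arg card ?_
          have hlen : σ.length = n := by simpa using (mem_permsOf.1 hσ).length_eq
          rw [bipartiteBelow, filter_filter]
          refine filter_congr fun m hm => and_congr_right fun _ => ?_
          exact pairwise_take_and_avoidsIncRun_drop_iff hlen (Nat.lt_succ_iff.1 (mem_range.1 hm))
  rw [hcount, hcount]
  exact sum_congr rfl fun σ _ => card_isCut_mod_zero_eq_mod_one _ hk hn

open PowerSeries Nat

theorem coeff_mul_mk_div_factorial {K : Type*} [Field K] [CharZero K] (f g : ℕ → K) (n : ℕ) :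
    coeff n (mk (fun n => f n / n !) * mk fun n => g n / n !) =
      (∑ m ∈ range (n + 1), n.choose m * f m * g (n - m)) / n ! := by
  rw [coeff_mul, Nat.sum_antidiagonal_eq_sum_range_succ_mk, sum_div]
  refine sum_congr rfl fun m hm => ?_
  rw [coeff_mk, coeff_mk, Nat.cast_choose K (Nat.lt_succ_iff.1 (mem_range.1 hm))]
  field_simp
  rw [mul_div_mul_right _ _ (Nat.cast_ne_zero.2 (Nat.factorial_ne_zero n))]

end ConsecutiveIncreasing

open ConsecutiveIncreasing Finset PowerSeries in
/-- For the increasing pattern `1 2 … k` (0-indexed: `List.range k`), the inverse of the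
exponential generating function of avoiders is
`Σ_{q≥0} t^{kq}/(kq)! − Σ_{q≥0} t^{kq+1}/(kq+1)!`, as formal power series over `ℚ`. -/
theorem statement16 (k : ℕ) (hk : 2 ≤ k) :
    (PowerSeries.mk fun n : ℕ =>
          if n % k = 0 then (1 : ℚ) / (n.factorial : ℚ)
          else if n % k = 1 then -(1 : ℚ) / (n.factorial : ℚ)
          else 0) *
        (PowerSeries.mk fun n : ℕ =>
          (avoidCount {List.range k} n : ℚ) / (n.factorial : ℚ)) = 1 := by
  set sign : ℕ → ℚ := fun m => if m % k = 0 then 1 else if m % k = 1 then -1 else 0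
  have hsign : ∀ n m : ℕ, (n.choose m : ℚ) * sign m * (avoiders k (n - m)).card =
      ((if m % k = 0 then n.choose m * (avoiders k (n - m)).card else 0 : ℕ) : ℚ) -
        ((if m % k = 1 then n.choose m * (avoiders k (n - m)).card else 0 : ℕ) : ℚ) := by
    intro n m
    simp only [sign]
    split_ifs <;> simp_all
  have hfirst : (mk fun n : ℕ => if n % k = 0 then (1 : ℚ) / n.factorial
      else if n % k = 1 then -(1 : ℚ) / n.factorial else 0) = mk fun n => sign n / n.factorial := by
    ext n
    simp only [coeff_mk, sign]
    split_ifs <;> simp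
  ext n
  simp only [hfirst, avoidCount_eq_card_avoiders, coeff_mul_mk_div_factorial, coeff_one, hsign]
  rcases Nat.eq_zero_or_pos n with rfl | hn
  · simp [card_avoiders_zero (by omega : 1 ≤ k)]
  · rw [sum_sub_distrib, ← Nat.cast_sum, ← Nat.cast_sum, ← sum_filter, ← sum_filter,
      sum_choose_mul_card_avoiders_mod_zero_eq_mod_one hk hn, sub_self, zero_div, if_neg hn.ne']
end
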